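/- For n ∈ {2^m − 1, 2^m − 3} with m ≥ 3, the determining number of the folded hypercube FQ_n equals ⌈lg n⌉ + 2. -/

import Mathlib

/-- `S` is a determining set for `G`: the only automorphism fixing `S` pointwise
is the identity. -/
def IsDeterminingSet {V : Type*} (G : SimpleGraph V) (S : Set V) : Prop :=
  ∀ φ : G ≃g G, (∀ v ∈ S, φ v = v) → ∀ v, φ v = v

/-- The determining number: minimum size of a determining set. -/
noncomputable def detNum {V : Type*} (G : SimpleGraph V) : ℕ :=
  sInf {r | ∃ S : Set V, S.ncard = r ∧ IsDeterminingSet G S}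

/-- A coloring is distinguishing if the only automorphism preserving all color
classes is the identity. -/
def IsDistinguishing {V : Type*} (G : SimpleGraph V) {d : ℕ} (c : V → Fin d) : Prop :=
  ∀ φ : G ≃g G, (∀ v, c (φ v) = c v) → ∀ v, φ v = v

/-- The distinguishing number: least `d` admitting a distinguishing `d`-coloring. -/
noncomputable def distNum {V : Type*} (G : SimpleGraph V) : ℕ :=
  sInf {d | ∃ c : V → Fin d, IsDistinguishing G c}

/-- `S` is a color class of a 2-distinguishing coloring: every automorphism
preserving `S` setwise is the identity. -/
def IsDistClass {V : Type*} (G : SimpleGraph V) (S : Set V) : Prop :=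
  ∀ φ : G ≃g G, (∀ v, φ v ∈ S ↔ v ∈ S) → ∀ v, φ v = v

/-- The cost of 2-distinguishing: minimum size of a color class over all
2-distinguishing colorings. -/
noncomputable def costNum {V : Type*} (G : SimpleGraph V) : ℕ :=
  sInf {m | ∃ S : Set V, S.ncard = m ∧ IsDistClass G S}

/-- The folded hypercube `FQ_n`: binary `n`-vectors, adjacent iff their Hamming
distance is 1 or `n`. -/
def FQ (n : ℕ) : SimpleGraph (Fin n → ZMod 2) :=
  SimpleGraph.fromRel (fun x y => hammingDist x y = 1 ∨ hammingDist x y = n)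

/-!
Write `Fin n → ZMod 2` as the quotient of `Fin (n + 1) → ZMod 2` by the all-ones vector (`proj`).
The `n + 1` directions `e_1, …, e_n, 1` of `FQ_n` are the images `dir k` of the unit vectors, so
every permutation of the `n + 1` coordinates induces an automorphism. With the translations these
are all automorphisms: one fixing `0` and each `dir k` fixes everything, by induction on the
weight, because the only common neighbours of `x + e_i` and `x + e_j` are `x` and `x + e_i + e_j`.

Upper bound: `0`, `e_1` and the vectors `proj (j ↦ i-th bit of j)`, `i < m`, determine `FQ_n` if
`n + 1 ≤ 2^m`: a coordinate permutation fixing them fixes the coordinate `0`, hence every bit of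
every coordinate.

Lower bound: for a determining set `S ∋ s₀`, lift the vectors `s + s₀`, `s ∈ S \ {s₀}`, and read
them column by column, getting `n + 1` vectors in `ZMod 2 ^ (S \ {s₀})`. A coordinate permutation
that shifts every column by one common vector fixes `S` pointwise. Two equal columns give a
transposition. Otherwise, if `n + 1 = 2^t` or `n + 3 = 2^t` with `t = |S| - 1`, the columns fill
the cube or miss exactly a pair `{p, q}`, and are invariant under translation by `p + q ≠ 0`.
-/

open Function Equiv

lemma zmod_two_ne_zero_iff {a : ZMod 2} : a ≠ 0 ↔ a = 1 := by
  revert a; decide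

lemma ZModModule.eq_add_of_add_eq {G : Type*} [AddCommGroup G] [Module (ZMod 2) G] {a b c : G}
    (h : a + b = c) : b = a + c := by
  rw [← h, ← add_assoc, ZModModule.add_self, zero_add]

lemma ZModModule.add_add_add_add_cancel {G : Type*} [AddCommGroup G] [Module (ZMod 2) G]
    (a b c d : G) : a + b + c + (a + d + c) = b + d := by
  abel_nf
  simp [two_zsmul, ZModModule.add_self]

lemma Finset.exists_notMem_of_card_lt {ι : Type*} [Fintype ι] {s : Finset ι}
    (h : s.card < Fintype.card ι) : ∃ t, t ∉ s := by
  obtain ⟨t, -, ht⟩ := Finset.exists_mem_notMem_of_card_lt_card (t := Finset.univ) h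
  exact ⟨t, ht⟩

lemma hammingNorm_eq_one_iff {ι : Type*} [Fintype ι] [DecidableEq ι] {z : ι → ZMod 2} :
    hammingNorm z = 1 ↔ ∃ i, z = Pi.single i 1 := by
  simp only [hammingNorm, Finset.card_eq_one, Finset.eq_singleton_iff_unique_mem,
    Finset.mem_filter, Finset.mem_univ, true_and, funext_iff, Pi.single_apply]
  constructor
  · rintro ⟨i, hi, hu⟩
    refine ⟨i, fun j => ?_⟩
    split_ifs with hj
    · exact zmod_two_ne_zero_iff.mp (hj ▸ hi)
    · exact not_not.mp (mt (hu j) hj)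
  · rintro ⟨i, hi⟩
    refine ⟨i, by simp [hi], fun j hj => ?_⟩
    simpa [hi] using hj

lemma hammingNorm_eq_card_iff {ι : Type*} [Fintype ι] {z : ι → ZMod 2} :
    hammingNorm z = Fintype.card ι ↔ z = 1 := by
  simp only [hammingNorm, ← Finset.card_univ, Finset.card_filter_eq_iff, Finset.mem_univ,
    true_imp_iff, funext_iff, Pi.one_apply, zmod_two_ne_zero_iff]

lemma hammingNorm_add_single {ι : Type*} [Fintype ι] [DecidableEq ι] {x : ι → ZMod 2} {i : ι}
    (hi : x i ≠ 0) : hammingNorm (x + Pi.single i 1) + 1 = hammingNorm x := by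
  have hsupp : (Finset.univ.filter fun j => x j + (Pi.single i 1 : ι → ZMod 2) j ≠ 0)
      = (Finset.univ.filter fun j => x j ≠ 0).erase i := by
    ext j
    rcases eq_or_ne j i with rfl | hj
    · simp [zmod_two_ne_zero_iff.mp hi, ZModModule.add_self]
    · simp [hj]
  simp only [hammingNorm, Pi.add_apply, hsupp]
  exact Finset.card_erase_add_one (by simpa using hi)

lemma exists_perm_ne_one_apply_eq_add {ι A : Type*} [Finite ι] [Nonempty ι] [AddGroup A]
    {β : ι → A} (hβ : Injective β) {c : A} (hc : c ≠ 0) (hR : ∀ j, β j + c ∈ Set.range β) :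
    ∃ σ : Perm ι, σ ≠ 1 ∧ ∀ j, β (σ j) = β j + c := by
  choose g hg using hR
  have hg_inj : Injective g := fun j k h => hβ (add_right_cancel (by rw [← hg, ← hg, h]))
  refine ⟨Equiv.ofBijective g hg_inj.bijective_of_finite, fun h1 => hc ?_, hg⟩
  obtain ⟨j⟩ := ‹Nonempty ι›
  have hj : g j = j := DFunLike.congr_fun h1 j
  simpa [hj] using (hg j).symm

lemma ZModModule.exists_ne_zero_forall_add_mem_of_ncard_compl_eq_two {A : Type*} [AddCommGroup A]
    [Module (ZMod 2) A] {R : Set A} (h : Rᶜ.ncard = 2) : ∃ c ≠ 0, ∀ a ∈ R, a + c ∈ R := by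
  obtain ⟨p, q, hpq, hRc⟩ := Set.ncard_eq_two.mp h
  have hp : p ∉ R := fun hp => (hRc ▸ Set.mem_insert p {q} : p ∈ Rᶜ) hp
  have hq : q ∉ R := fun hq => (hRc ▸ Set.mem_insert_of_mem p rfl : q ∈ Rᶜ) hq
  refine ⟨p + q, fun h0 => hpq ?_, fun a ha => ?_⟩
  · rw [← ZModModule.sub_eq_add, sub_eq_zero] at h0
    exact h0
  · by_contra hout
    have : a + (p + q) ∈ ({p, q} : Set A) := hRc ▸ hout
    rcases this with h' | h'
    · refine hq ?_
      rwa [eq_sub_of_add_eq h', ZModModule.sub_eq_add, ← add_assoc, ZModModule.add_self,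
        zero_add] at ha
    · refine hp ?_
      rwa [eq_sub_of_add_eq (Set.mem_singleton_iff.mp h'), ZModModule.sub_eq_add, add_comm p,
        ← add_assoc, ZModModule.add_self, zero_add] at ha

namespace FoldedHypercube

variable {n : ℕ}

def proj : (Fin (n + 1) → ZMod 2) →+ (Fin n → ZMod 2) where
  toFun y i := y i.castSucc + y (Fin.last n)
  map_zero' := by ext; simp
  map_add' y z := by ext; simp only [Pi.add_apply]; ring

lemma proj_apply (y : Fin (n + 1) → ZMod 2) (i : Fin n) :
    proj y i = y i.castSucc + y (Fin.last n) := rfl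

def lift (x : Fin n → ZMod 2) : Fin (n + 1) → ZMod 2 := Fin.snoc x 0

@[simp]
lemma lift_zero : lift (0 : Fin n → ZMod 2) = 0 := by
  ext j; cases j using Fin.lastCases <;> simp [lift]

@[simp]
lemma proj_lift (x : Fin n → ZMod 2) : proj (lift x) = x := by
  ext i; simp [proj_apply, lift]

lemma proj_const (c : ZMod 2) : proj (fun _ => c : Fin (n + 1) → ZMod 2) = 0 := by
  ext i; simp [proj_apply, ZModModule.add_self]

lemma lift_proj (y : Fin (n + 1) → ZMod 2) : lift (proj y) = y + fun _ => y (Fin.last n) := by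
  ext j
  cases j using Fin.lastCases with
  | last => simp [lift, ZModModule.add_self]
  | cast i => simp [lift, proj_apply]

lemma eq_of_proj_eq {y z : Fin (n + 1) → ZMod 2} (h : proj y = proj z) {t : Fin (n + 1)}
    (ht : y t = z t) : y = z := by
  have hw : lift (proj (y + z)) = 0 := by
    rw [map_add, h, ZModModule.add_self, lift_zero]
  rw [lift_proj] at hw
  ext j
  have hj := congrFun hw j
  have ht' := congrFun hw t
  simp only [Pi.add_apply, Pi.zero_apply] at hj ht'
  rw [ht, ZModModule.add_self, zero_add] at ht'
  rw [ht', add_zero, ← ZModModule.sub_eq_add, sub_eq_zero] at hj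
  exact hj

def dir (k : Fin (n + 1)) : Fin n → ZMod 2 := proj (Pi.single k 1)

lemma dir_castSucc (i : Fin n) : dir i.castSucc = Pi.single i 1 := by
  ext j
  simp [dir, proj_apply, Pi.single_apply, (Fin.castSucc_lt_last _).ne]

lemma dir_last : dir (Fin.last n) = 1 := by
  ext j
  simp [dir, proj_apply, (Fin.castSucc_lt_last _).ne]

lemma dir_injective (hn : 2 ≤ n) : Injective (dir (n := n)) := by
  intro k l h
  obtain ⟨t, ht⟩ := Finset.exists_notMem_of_card_lt (s := {k, l})
    (Finset.card_le_two.trans_lt (by simp; omega))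
  simp only [Finset.mem_insert, Finset.mem_singleton, not_or] at ht
  have := congrFun (eq_of_proj_eq h (t := t) (by simp [ht.1, ht.2])) k
  by_contra hkl
  simp [hkl] at this

lemma hammingNorm_eq_one_or_eq_iff_exists_dir {z : Fin n → ZMod 2} :
    hammingNorm z = 1 ∨ hammingNorm z = n ↔ ∃ k, z = dir k := by
  have hcard := hammingNorm_eq_card_iff (z := z)
  rw [Fintype.card_fin] at hcard
  rw [hammingNorm_eq_one_iff, hcard, Fin.exists_fin_succ']
  simp only [dir_castSucc, dir_last]

lemma adj_iff {x y : Fin n → ZMod 2} : (FQ n).Adj x y ↔ x ≠ y ∧ ∃ k, x + y = dir k := by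
  rw [FQ, SimpleGraph.fromRel_adj, hammingDist_comm y x, or_self, hammingDist_eq_hammingNorm,
    ZModModule.neg_eq_self, hammingNorm_eq_one_or_eq_iff_exists_dir]

lemma adj_add_single (x : Fin n → ZMod 2) (i : Fin n) : (FQ n).Adj (x + Pi.single i 1) x := by
  refine adj_iff.mpr ⟨fun h => ?_, i.castSucc, ?_⟩
  · simpa using congrFun h i
  · rw [add_right_comm, ZModModule.add_self, zero_add, dir_castSucc]

lemma adj_zero_dir (hn : 1 ≤ n) (k : Fin (n + 1)) : (FQ n).Adj 0 (dir k) := by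
  refine adj_iff.mpr ⟨fun h => ?_, k, zero_add _⟩
  have := hammingNorm_eq_one_or_eq_iff_exists_dir.mpr ⟨k, rfl⟩
  rw [← h, hammingNorm_zero] at this
  omega

def permMap (σ : Perm (Fin (n + 1))) (x : Fin n → ZMod 2) : Fin n → ZMod 2 :=
  proj (lift x ∘ σ.symm)

lemma permMap_proj (σ : Perm (Fin (n + 1))) (y : Fin (n + 1) → ZMod 2) :
    permMap σ (proj y) = proj (y ∘ σ.symm) := by
  rw [permMap, lift_proj]
  exact (map_add proj _ _).trans (by rw [proj_const, add_zero]; rfl)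

lemma permMap_dir (σ : Perm (Fin (n + 1))) (k : Fin (n + 1)) : permMap σ (dir k) = dir (σ k) := by
  rw [dir, permMap_proj, Pi.single_comp_equiv, Equiv.symm_symm, dir]

lemma permMap_add (σ : Perm (Fin (n + 1))) (x y : Fin n → ZMod 2) :
    permMap σ (x + y) = permMap σ x + permMap σ y := by
  rw [← proj_lift x, ← proj_lift y, ← map_add, permMap_proj, permMap_proj, permMap_proj, ← map_add]
  rfl

lemma permMap_permMap (σ τ : Perm (Fin (n + 1))) (x : Fin n → ZMod 2) :
    permMap σ (permMap τ x) = permMap (σ * τ) x :=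
  permMap_proj σ _

@[simp]
lemma permMap_one (x : Fin n → ZMod 2) : permMap 1 x = x :=
  proj_lift x

@[simp]
lemma permMap_zero (σ : Perm (Fin (n + 1))) : permMap σ 0 = 0 := by
  simp [permMap, lift_zero]

lemma permMap_inv_permMap (σ : Perm (Fin (n + 1))) (x : Fin n → ZMod 2) :
    permMap σ⁻¹ (permMap σ x) = x := by
  rw [permMap_permMap, inv_mul_cancel, permMap_one]

lemma permMap_permMap_inv (σ : Perm (Fin (n + 1))) (x : Fin n → ZMod 2) :
    permMap σ (permMap σ⁻¹ x) = x := by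
  rw [permMap_permMap, mul_inv_cancel, permMap_one]

def permAut (σ : Perm (Fin (n + 1))) : FQ n ≃g FQ n where
  toFun := permMap σ
  invFun := permMap σ⁻¹
  left_inv := permMap_inv_permMap σ
  right_inv := permMap_permMap_inv σ
  map_rel_iff' {x y} := by
    have hinj : Injective (permMap σ) := LeftInverse.injective (permMap_inv_permMap σ)
    simp only [Equiv.coe_fn_mk, adj_iff, ← permMap_add, hinj.ne_iff]
    refine and_congr_right fun _ => ⟨fun ⟨k, hk⟩ => ⟨σ⁻¹ k, ?_⟩, fun ⟨k, hk⟩ => ⟨σ k, ?_⟩⟩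
    · rw [← permMap_dir, ← hk, permMap_inv_permMap]
    · rw [hk, permMap_dir]

@[simp]
lemma permAut_apply (σ : Perm (Fin (n + 1))) (x : Fin n → ZMod 2) : permAut σ x = permMap σ x :=
  rfl

def translate (b : Fin n → ZMod 2) : FQ n ≃g FQ n where
  toEquiv := Equiv.addRight b
  map_rel_iff' {x y} := by
    change (FQ n).Adj (x + b) (y + b) ↔ _
    rw [adj_iff, adj_iff, add_add_add_comm, ZModModule.add_self, add_zero, ne_eq, add_left_inj]

@[simp]
lemma translate_apply (b x : Fin n → ZMod 2) : translate b x = x + b :=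
  rfl

lemma dir_add_dir_eq_single_add_single (hn : 4 ≤ n) {i j : Fin n} (hij : i ≠ j) {k l : Fin (n + 1)}
    (h : dir k + dir l = Pi.single i 1 + Pi.single j 1) :
    k = i.castSucc ∧ l = j.castSucc ∨ k = j.castSucc ∧ l = i.castSucc := by
  rw [← dir_castSucc, ← dir_castSucc, dir, dir, dir, dir, ← map_add, ← map_add] at h
  obtain ⟨t, ht⟩ := Finset.exists_notMem_of_card_lt (s := {k, l, i.castSucc, j.castSucc})
    (Finset.card_le_four.trans_lt (by simp; omega))
  simp only [Finset.mem_insert, Finset.mem_singleton, not_or] at ht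
  have h' := eq_of_proj_eq h (t := t) (by simp [ht.1, ht.2.1, ht.2.2.1, ht.2.2.2])
  rw [Pi.single_add_single_eq_single_add_single one_ne_zero one_ne_zero] at h'
  rcases h' with h' | ⟨-, h'⟩ | ⟨-, -, h'⟩
  · exact Or.inl h'
  · exact Or.inr h'
  · exact absurd (Fin.castSucc_injective _ h') hij

lemma eq_or_eq_of_adj_of_adj (hn : 4 ≤ n) {i j : Fin n} (hij : i ≠ j) {x w : Fin n → ZMod 2}
    (hi : (FQ n).Adj (x + Pi.single i 1) w) (hj : (FQ n).Adj (x + Pi.single j 1) w) :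
    w = x ∨ w = x + Pi.single i 1 + Pi.single j 1 := by
  obtain ⟨-, k, hk⟩ := adj_iff.mp hi
  obtain ⟨-, l, hl⟩ := adj_iff.mp hj
  have hsum : dir k + dir l = Pi.single i 1 + Pi.single j 1 := by
    rw [← hk, ← hl, ZModModule.add_add_add_add_cancel]
  rcases dir_add_dir_eq_single_add_single hn hij hsum with ⟨rfl, -⟩ | ⟨rfl, -⟩
  · rw [dir_castSucc] at hk
    left
    rw [ZModModule.eq_add_of_add_eq hk, add_assoc, ZModModule.add_self, add_zero]
  · rw [dir_castSucc] at hk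
    exact Or.inr (ZModModule.eq_add_of_add_eq hk)

lemma apply_eq_self_of_map_dir (hn : 4 ≤ n) (φ : FQ n ≃g FQ n) (h0 : φ 0 = 0)
    (hdir : ∀ k, φ (dir k) = dir k) (x : Fin n → ZMod 2) : φ x = x := by
  induction hw : hammingNorm x using Nat.strong_induction_on generalizing x with
  | _ w ih =>
  rcases lt_or_ge w 2 with hw2 | hw2
  · interval_cases w
    · rw [hammingNorm_eq_zero.mp hw, h0]
    · obtain ⟨i, rfl⟩ := hammingNorm_eq_one_iff.mp hw
      rw [← dir_castSucc, hdir]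
  obtain ⟨i, hi, j, hj, hij⟩ := Finset.one_lt_card.mp (hw ▸ hw2 : 1 < hammingNorm x)
  simp only [Finset.mem_filter, Finset.mem_univ, true_and] at hi hj
  have hwi := hammingNorm_add_single hi
  have hwj := hammingNorm_add_single hj
  have hwij := hammingNorm_add_single (x := x + Pi.single i 1) (i := j) (by simpa [hij.symm])
  have hfix : ∀ y, hammingNorm y < w → φ y = y := fun y hy => ih _ hy y rfl
  have hadj : ∀ k, hammingNorm (x + Pi.single k 1) < w → (FQ n).Adj (x + Pi.single k 1) (φ x) :=
    fun k hk => by simpa only [hfix _ hk] using φ.map_adj_iff.mpr (adj_add_single x k)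
  rcases eq_or_eq_of_adj_of_adj hn hij (hadj i (by omega)) (hadj j (by omega)) with h | h
  · exact h
  · rw [← hfix (x + Pi.single i 1 + Pi.single j 1) (by omega)] at h
    simpa [hij] using congrFun (φ.injective h) i

lemma exists_perm_apply_eq_permMap_add (hn : 4 ≤ n) (φ : FQ n ≃g FQ n) :
    ∃ σ : Perm (Fin (n + 1)), ∀ x, φ x = permMap σ x + φ 0 := by
  let ψ : FQ n ≃g FQ n := φ.trans (translate (φ 0))
  have hψ0 : ψ 0 = 0 := ZModModule.add_self _
  have hψdir : ∀ k, ∃ k', ψ (dir k) = dir k' := fun k => by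
    obtain ⟨-, k', hk'⟩ := adj_iff.mp (ψ.map_adj_iff.mpr (adj_zero_dir (by omega) k))
    rw [hψ0, zero_add] at hk'
    exact ⟨k', hk'⟩
  choose f hf using hψdir
  have hf_inj : Injective f := fun k l h =>
    dir_injective (by omega) (ψ.injective (by rw [hf, hf, h]))
  let σ := Equiv.ofBijective f hf_inj.bijective_of_finite
  refine ⟨σ, fun x => ?_⟩
  have hfix : permMap σ⁻¹ (φ x + φ 0) = x :=
    apply_eq_self_of_map_dir hn (ψ.trans (permAut σ⁻¹)) (by simp [hψ0])
      (fun k => show permMap σ⁻¹ (ψ (dir k)) = dir k by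
        rw [hf, permMap_dir]
        exact congrArg dir (σ.symm_apply_apply k)) x
  calc φ x = permMap σ (permMap σ⁻¹ (φ x + φ 0)) + φ 0 := by
        rw [permMap_permMap_inv, add_assoc, ZModModule.add_self, add_zero]
    _ = permMap σ x + φ 0 := by rw [hfix]

def bitVec (i : ℕ) : Fin (n + 1) → ZMod 2 := fun j => if (j : ℕ).testBit i then 1 else 0

def bitFinset (n m : ℕ) : Finset (Fin n → ZMod 2) :=
  insert 0 (insert (dir 0) (Finset.univ.image fun i : Fin m => proj (bitVec i)))

lemma card_bitFinset_le (m : ℕ) : (bitFinset n m).card ≤ m + 2 := by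
  unfold bitFinset
  grw [Finset.card_insert_le, Finset.card_insert_le, Finset.card_image_le, Finset.card_univ,
    Fintype.card_fin]

lemma proj_bitVec_mem_bitFinset {m i : ℕ} (hi : i < m) : proj (bitVec i) ∈ bitFinset n m := by
  simp only [bitFinset, Finset.mem_insert, Finset.mem_image, Finset.mem_univ, true_and]
  exact Or.inr (Or.inr ⟨⟨i, hi⟩, rfl⟩)

lemma isDeterminingSet_bitFinset (hn : 4 ≤ n) {m : ℕ} (hm : n + 1 ≤ 2 ^ m) :
    IsDeterminingSet (FQ n) (bitFinset n m) := by
  intro φ hfix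
  obtain ⟨σ, hσ⟩ := exists_perm_apply_eq_permMap_add hn φ
  have hσ' : ∀ x, φ x = permMap σ x := by
    simpa [hfix 0 (by simp [bitFinset])] using hσ
  have hσ0 : σ.symm 0 = 0 := by
    rw [symm_apply_eq]
    exact dir_injective (by omega) (by rw [← permMap_dir, ← hσ', hfix _ (by simp [bitFinset])])
  have hbit : ∀ i < m, bitVec i ∘ σ.symm = bitVec i := fun i hi =>
    eq_of_proj_eq (t := 0) (by
      rw [← permMap_proj, ← hσ', hfix _ (Finset.mem_coe.mpr (proj_bitVec_mem_bitFinset hi))])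
      (by simp [hσ0])
  have hσ1 : σ = 1 := by
    refine Equiv.ext fun j => Fin.ext (Nat.eq_of_testBit_eq fun i => ?_)
    rcases lt_or_ge i m with hi | hi
    · have := congrFun (hbit i hi) (σ j)
      simp only [comp_apply, symm_apply_apply, bitVec] at this
      rw [Perm.one_apply]
      revert this
      cases (σ j : ℕ).testBit i <;> cases (j : ℕ).testBit i <;> simp
    · rw [Nat.testBit_eq_false_of_lt, Nat.testBit_eq_false_of_lt] <;>
        exact (Fin.is_lt _).trans_le (hm.trans (Nat.pow_le_pow_right two_pos hi))
  intro x
  rw [hσ', hσ1, permMap_one]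

lemma not_isDeterminingSet_of_perm (hn : 2 ≤ n) {S : Set (Fin n → ZMod 2)} (s₀ : Fin n → ZMod 2)
    {σ : Perm (Fin (n + 1))} (hσ : σ ≠ 1) (hfix : ∀ s ∈ S, permMap σ (s + s₀) = s + s₀) :
    ¬ IsDeterminingSet (FQ n) S := by
  intro hS
  obtain ⟨k, hk⟩ : ∃ k, σ k ≠ k := by
    by_contra! h
    exact hσ (Equiv.ext h)
  have := hS ((translate s₀).trans ((permAut σ).trans (translate s₀)))
    (fun s hs => by simp [hfix s hs, add_assoc, ZModModule.add_self]) (dir k + s₀)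
  simp only [RelIso.trans_apply, translate_apply, permAut_apply, add_assoc,
    ZModModule.add_self, add_zero, permMap_dir, add_left_inj] at this
  exact hk (dir_injective hn this)

def columns (S : Set (Fin n → ZMod 2)) (s₀ : Fin n → ZMod 2) (j : Fin (n + 1)) :
    ↥(S \ {s₀}) → ZMod 2 :=
  fun s => lift ((s : Fin n → ZMod 2) + s₀) j

lemma not_isDeterminingSet_of_columns (hn : 2 ≤ n) {S : Set (Fin n → ZMod 2)}
    {s₀ : Fin n → ZMod 2} {σ : Perm (Fin (n + 1))} (hσ : σ ≠ 1) {c : ↥(S \ {s₀}) → ZMod 2}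
    (hc : ∀ j, columns S s₀ (σ j) = columns S s₀ j + c) : ¬ IsDeterminingSet (FQ n) S := by
  refine not_isDeterminingSet_of_perm hn s₀ (inv_ne_one.mpr hσ) fun s hs => ?_
  by_cases hs₀ : s = s₀
  · rw [hs₀, ZModModule.add_self, permMap_zero]
  · have hlift : lift (s + s₀) ∘ ⇑(σ⁻¹).symm = lift (s + s₀) + fun _ => c ⟨s, hs, hs₀⟩ :=
      funext fun j => congrFun (hc j) ⟨s, hs, hs₀⟩
    rw [← proj_lift (s + s₀), permMap_proj, hlift, map_add, proj_const, add_zero]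

lemma columns_injective (hn : 2 ≤ n) {S : Set (Fin n → ZMod 2)} (hS : IsDeterminingSet (FQ n) S)
    (s₀ : Fin n → ZMod 2) : Injective (columns S s₀) := by
  intro j₁ j₂ h
  by_contra hne
  refine not_isDeterminingSet_of_columns hn (s₀ := s₀) (swap_eq_one_iff.not.mpr hne) (c := 0)
    (fun j => ?_) hS
  rw [add_zero, swap_apply_def]
  split_ifs with h₁ h₂
  · rw [h₁, h]
  · rw [h₂, h]
  · rfl

theorem lt_two_pow_and_ne_of_isDeterminingSet (hn : 2 ≤ n) {S : Set (Fin n → ZMod 2)}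
    (hS : IsDeterminingSet (FQ n) S) :
    n + 1 < 2 ^ (S.ncard - 1) ∧ n + 3 ≠ 2 ^ (S.ncard - 1) := by
  obtain ⟨s₀, hT⟩ : ∃ s₀, (S \ {s₀}).ncard = S.ncard - 1 := by
    rcases S.eq_empty_or_nonempty with rfl | ⟨s₀, hs₀⟩
    · exact ⟨0, by simp⟩
    · exact ⟨s₀, Set.ncard_sdiff_singleton_of_mem hs₀⟩
  have hβ := columns_injective hn hS s₀
  have hcard : Nat.card (↥(S \ {s₀}) → ZMod 2) = 2 ^ (S.ncard - 1) := by
    rw [Nat.card_fun, Nat.card_zmod, Nat.card_coe_set_eq, hT]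
  have hrange : (Set.range (columns S s₀)).ncard = n + 1 := by
    rw [Set.ncard_range_of_injective hβ, Nat.card_eq_fintype_card, Fintype.card_fin]
  have hsymm : ¬ ∃ c ≠ 0, ∀ a ∈ Set.range (columns S s₀), a + c ∈ Set.range (columns S s₀) := by
    rintro ⟨c, hc, hR⟩
    obtain ⟨σ, hσ, hσc⟩ := exists_perm_ne_one_apply_eq_add hβ hc fun j => hR _ ⟨j, rfl⟩
    exact not_isDeterminingSet_of_columns hn hσ hσc hS
  have hle : n + 1 ≤ 2 ^ (S.ncard - 1) := by
    simpa [hcard] using Nat.card_le_card_of_injective _ hβ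
  refine ⟨hle.lt_of_ne fun h => hsymm ?_, fun h => hsymm ?_⟩
  · have : Nontrivial (↥(S \ {s₀}) → ZMod 2) := Finite.one_lt_card_iff_nontrivial.mp (by omega)
    obtain ⟨c, hc⟩ := exists_ne (0 : ↥(S \ {s₀}) → ZMod 2)
    have huniv : Set.range (columns S s₀) = Set.univ := (Set.eq_univ_iff_ncard _).mpr (by omega)
    exact ⟨c, hc, fun a _ => huniv ▸ trivial⟩
  · exact ZModModule.exists_ne_zero_forall_add_mem_of_ncard_compl_eq_two
      (by rw [Set.ncard_compl, hrange, hcard]; omega)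

theorem detNum_le (hn : 4 ≤ n) {m : ℕ} (hm : n + 1 ≤ 2 ^ m) : detNum (FQ n) ≤ m + 2 := by
  calc detNum (FQ n) ≤ (bitFinset n m : Set (Fin n → ZMod 2)).ncard :=
        Nat.sInf_le ⟨_, rfl, isDeterminingSet_bitFinset hn hm⟩
    _ ≤ m + 2 := (Set.ncard_coe_finset _).trans_le (card_bitFinset_le m)

theorem lt_two_pow_and_ne_detNum (hn : 4 ≤ n) :
    n + 1 < 2 ^ (detNum (FQ n) - 1) ∧ n + 3 ≠ 2 ^ (detNum (FQ n) - 1) := by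
  obtain ⟨S, hS_card, hS⟩ : detNum (FQ n) ∈ {r | ∃ S : Set (Fin n → ZMod 2),
      S.ncard = r ∧ IsDeterminingSet (FQ n) S} :=
    Nat.sInf_mem ⟨_, _, rfl, isDeterminingSet_bitFinset hn (Nat.lt_two_pow_self (n := n + 1)).le⟩
  rw [← hS_card]
  exact lt_two_pow_and_ne_of_isDeterminingSet (by omega) hS

end FoldedHypercube

/-- For `n ∈ {2^m - 1, 2^m - 3}` with `m ≥ 3`, `det(FQ_n) = ⌈lg n⌉ + 2`. -/
theorem stmt12 (n m : ℕ) (hm : 3 ≤ m) (h : n = 2 ^ m - 1 ∨ n = 2 ^ m - 3) :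
    detNum (FQ n) = Nat.clog 2 n + 2 := by
  have hpow : 2 ^ m = 2 * 2 ^ (m - 1) := by rw [← pow_succ']; congr; omega
  have h4 : 4 ≤ 2 ^ (m - 1) := Nat.pow_le_pow_right two_pos (by omega : 2 ≤ m - 1)
  have hclog : Nat.clog 2 n = m := by
    have hlt : m - 1 < Nat.clog 2 n := (Nat.lt_clog_iff_pow_lt one_lt_two).mpr (by omega)
    have hle : Nat.clog 2 n ≤ m := Nat.clog_le_of_le_pow (by omega)
    omega
  rw [hclog]
  refine le_antisymm (FoldedHypercube.detNum_le (by omega) (by omega)) ?_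
  obtain ⟨hlt, hne⟩ := FoldedHypercube.lt_two_pow_and_ne_detNum (n := n) (by omega)
  by_contra! hsmall
  have hge : m ≤ detNum (FQ n) - 1 := by
    by_contra! hlt'
    have := Nat.pow_le_pow_right two_pos (Nat.le_sub_one_of_lt hlt')
    omega
  rw [show detNum (FQ n) - 1 = m by omega] at hlt hne
  omega
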